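/- Let (T,*,[[·,·,·]]) be a left Bol algebra over ℝ and ω: T × T × T → T* a trilinear map. Define on T ⊕ T* the ternary operation [[x+f, y+g, z+h]]_ω := [[x,y,z]] + ω(x,y,z) + f∘R(z,y) - g∘R(z,x) + h∘L(y,x), where (f∘R(z,y))(u) = f([[u,z,y]]) and (h∘L(y,x))(u) = h([[y,x,u]]), and define b̃(x+f,y+g) := f(y) + g(x). Then b̃ satisfies the left invariance condition b̃([[x+f,y+g,z+h]]_ω, u+k) = -b̃(z+h, [[x+f,y+g,u+k]]_ω) for all x,y,z,u ∈ T, f,g,h,k ∈ T* if and only if ω(x,y,z)(u) = -ω(x,y,u)(z) for all x,y,z,u ∈ T. -/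

import Mathlib

/-- A left Bol algebra over ℝ: a real vector space with a bilinear operation `mul`
and a trilinear operation `tri` satisfying (T01), (T02), (T1), (T2) and (T3). -/
structure LeftBolAlgebra (T : Type*) [AddCommGroup T] [Module ℝ T] where
  mul : T →ₗ[ℝ] T →ₗ[ℝ] T
  tri : T →ₗ[ℝ] T →ₗ[ℝ] T →ₗ[ℝ] T
  mul_anticomm : ∀ x y : T, mul x y = - mul y x
  tri_skew : ∀ x y z : T, tri x y z = - tri y x z
  tri_cyclic : ∀ x y z : T, tri x y z + tri y z x + tri z x y = 0
  tri_leibniz : ∀ u v x y z : T,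
    tri u v (tri x y z) = tri (tri u v x) y z + tri x (tri u v y) z + tri x y (tri u v z)
  bol : ∀ u v x y : T, tri u v (mul x y) =
    mul (tri u v x) y + mul x (tri u v y) + tri x y (mul u v) - mul (mul x y) (mul u v)

variable {T : Type*} [AddCommGroup T] [Module ℝ T]

/-- The adjoint map R(u,v) : w ↦ [[w,u,v]]. -/
def LeftBolAlgebra.Rmap (A : LeftBolAlgebra T) (u v : T) : T →ₗ[ℝ] T where
  toFun w := A.tri w u v
  map_add' a c := by simp
  map_smul' r a := by simp

/-- The ternary operation
[[x+f, y+g, z+h]]_ω = [[x,y,z]] + ω(x,y,z) + f∘R(z,y) - g∘R(z,x) + h∘L(y,x)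
on T ⊕ T*, where R(u,v)(w) = [[w,u,v]] and L(u,v)(w) = [[u,v,w]]. -/
def triOmega (A : LeftBolAlgebra T)
    (ω : T →ₗ[ℝ] T →ₗ[ℝ] T →ₗ[ℝ] Module.Dual ℝ T)
    (p q r : T × Module.Dual ℝ T) : T × Module.Dual ℝ T :=
  (A.tri p.1 q.1 r.1,
    ω p.1 q.1 r.1 + p.2 ∘ₗ A.Rmap r.1 q.1 - q.2 ∘ₗ A.Rmap r.1 p.1 + r.2 ∘ₗ A.tri q.1 p.1)

/-- The form b̃ on T ⊕ T* given by b̃(x+f, y+g) = f(y) + g(x). -/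
def btilde (p q : T × Module.Dual ℝ T) : ℝ :=
  p.2 q.1 + q.2 p.1

/-- The f, g, h, k contributions cancel in pairs by the skew-symmetry (T02). -/
theorem btilde_triOmega_add_btilde_triOmega (A : LeftBolAlgebra T)
    (ω : T →ₗ[ℝ] T →ₗ[ℝ] T →ₗ[ℝ] Module.Dual ℝ T) (p q r s : T × Module.Dual ℝ T) :
    btilde (triOmega A ω p q r) s + btilde r (triOmega A ω p q s) =
      ω p.1 q.1 r.1 s.1 + ω p.1 q.1 s.1 r.1 := by
  simp only [btilde, triOmega, LinearMap.add_apply, LinearMap.sub_apply,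
    LinearMap.comp_apply, LeftBolAlgebra.Rmap, LinearMap.coe_mk, AddHom.coe_mk]
  rw [A.tri_skew s.1 r.1 q.1, A.tri_skew s.1 r.1 p.1, A.tri_skew q.1 p.1 s.1,
    A.tri_skew q.1 p.1 r.1]
  simp only [map_neg]
  ring

/-- For a left Bol algebra T and a trilinear map ω : T × T × T → T*, the form b̃
satisfies the left invariance condition
b̃([[x+f,y+g,z+h]]_ω, u+k) = -b̃(z+h, [[x+f,y+g,u+k]]_ω)
for all elements of T ⊕ T* if and only if ω(x,y,z)(u) = -ω(x,y,u)(z) for all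
x,y,z,u ∈ T. -/
theorem btilde_left_invariant_iff_omega
    (A : LeftBolAlgebra T) (ω : T →ₗ[ℝ] T →ₗ[ℝ] T →ₗ[ℝ] Module.Dual ℝ T) :
    (∀ p q r s : T × Module.Dual ℝ T,
        btilde (triOmega A ω p q r) s = - btilde r (triOmega A ω p q s)) ↔
      (∀ x y z u : T, ω x y z u = - ω x y u z) := by
  simp_rw [eq_neg_iff_add_eq_zero, btilde_triOmega_add_btilde_triOmega]
  constructor
  · intro h x y z u
    exact h (x, 0) (y, 0) (z, 0) (u, 0)
  · intro h p q r s
    exact h p.1 q.1 r.1 s.1
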